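/- arXiv:1907.01600 — 2 statements merged into one kernel-verified Lean document; each statement's English description precedes it below -/
import Mathlib

section
/- Let x and y be $-terminal strings and let ρ be an underlying function such that both τ(x,ρ) and τ(y,ρ) are complete. Then h_ρ(x) = h_ρ(y) if and only if the grid walk g(x,y,ρ) is alive. Moreover, if h_ρ(x) = h_ρ(y), then |τ(x,ρ)| = |τ(y,ρ)| and, at the end of the walk, i(x,|τ(x,ρ)|,ρ) = |x| and i(y,|τ(y,ρ)|,ρ) = |y| (the walk reaches the final corner of the grid). -/
open MeasureTheory

namespace EditLSH

/-- Hash operations: hash-insert, hash-replace, hash-match. -/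
inductive HashOp | ins | rep | mat
  deriving DecidableEq

/-- Grid walk characters. -/
inductive GOp | gins | gdel | grep | gloop | gmat | gstop
  deriving DecidableEq

/-- Transformation operations. -/
inductive TOp | tins | tdel | trep
  deriving DecidableEq

/-- `p_a = √(p/(1+p))`. -/
noncomputable def pa (p : ℝ) : ℝ := Real.sqrt (p / (1 + p))

/-- `p_r = √p/(√(1+p) − √p)`. -/
noncomputable def prr (p : ℝ) : ℝ := Real.sqrt p / (Real.sqrt (1 + p) - Real.sqrt p)

/-- `L = 8d/(1−p_a) + 6 ln n`. -/
noncomputable def Lreal (p : ℝ) (d n : ℕ) : ℝ := 8 * d / (1 - pa p) + 6 * Real.log n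

/-- The number of valid hash positions: `k` is a valid position iff `(k : ℝ) < Lreal p d n`
iff `k < LN p d n`. -/
noncomputable def LN (p : ℝ) (d n : ℕ) : ℕ := ⌈Lreal p d n⌉₊

/-- An underlying function: a map from (character, hash position) pairs to pairs of reals.
Characters are `Option α`, where `none` plays the role of the special character `$`. -/
abbrev Ufun (α : Type) (p : ℝ) (d n : ℕ) : Type := (Option α × Fin (LN p d n)) → ℝ × ℝ

/-- Extend an underlying function to all of `ℕ` (positions `≥ L` are never queried). -/
noncomputable def ext {α : Type} (p : ℝ) (d n : ℕ) (ρ : Ufun α p d n) :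
    Option α × ℕ → ℝ × ℝ :=
  fun ck => if h : ck.2 < LN p d n then ρ (ck.1, ⟨ck.2, h⟩) else (1, 1)

/-- A string is `$`-terminal if its last character is `$` (i.e. `none`) and `$` occurs
nowhere else. -/
def DollarTerminal {α : Type} (x : List (Option α)) : Prop :=
  ∃ w : List α, x = w.map some ++ [none]

/-- The transcript of the hash computation: the list of operations performed by the
while loop, given the remaining input, the fuel `LN - k`, and the current output length `k`. -/
noncomputable def transcriptAux {α : Type} (pav prv : ℝ) (ρ : Option α × ℕ → ℝ × ℝ) :
    ℕ → List (Option α) → ℕ → List HashOp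
  | 0, _, _ => []
  | _ + 1, [], _ => []
  | fuel + 1, c :: rest, k =>
    if (ρ (c, k)).1 ≤ pav then HashOp.ins :: transcriptAux pav prv ρ fuel (c :: rest) (k + 1)
    else if (ρ (c, k)).2 ≤ prv then HashOp.rep :: transcriptAux pav prv ρ fuel rest (k + 1)
    else HashOp.mat :: transcriptAux pav prv ρ fuel rest (k + 1)

/-- The hash string produced by the while loop.  Output characters live in
`Option (Option α)`, with `none` playing the role of `⊥`. -/
noncomputable def hashAux {α : Type} (pav prv : ℝ) (ρ : Option α × ℕ → ℝ × ℝ) :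
    ℕ → List (Option α) → ℕ → List (Option (Option α))
  | 0, _, _ => []
  | _ + 1, [], _ => []
  | fuel + 1, c :: rest, k =>
    if (ρ (c, k)).1 ≤ pav then none :: hashAux pav prv ρ fuel (c :: rest) (k + 1)
    else if (ρ (c, k)).2 ≤ prv then none :: hashAux pav prv ρ fuel rest (k + 1)
    else some c :: hashAux pav prv ρ fuel rest (k + 1)

/-- The transcript `τ(x,ρ)`. -/
noncomputable def transcript {α : Type} (p : ℝ) (d n : ℕ) (ρ : Ufun α p d n)
    (x : List (Option α)) : List HashOp :=
  transcriptAux (pa p) (prr p) (ext p d n ρ) (LN p d n) x 0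

/-- The hash `h_ρ(x)` of an (already `$`-terminal) string `x`. -/
noncomputable def hash {α : Type} (p : ℝ) (d n : ℕ) (ρ : Ufun α p d n)
    (x : List (Option α)) : List (Option (Option α)) :=
  hashAux (pa p) (prr p) (ext p d n ρ) (LN p d n) x 0

/-- `τ(x,ρ)` is complete if `|τ(x,ρ)| < L`. -/
noncomputable def CompleteT (p : ℝ) (d n : ℕ) (τ : List HashOp) : Prop :=
  (τ.length : ℝ) < Lreal p d n

/-- The index function `i(x,k,ρ)`: the scanning index just before the `(k+1)`-st operation,
i.e. the number of non-hash-insert operations among the first `k` operations. -/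
noncomputable def idx {α : Type} (p : ℝ) (d n : ℕ) (ρ : Ufun α p d n)
    (x : List (Option α)) (k : ℕ) : ℕ :=
  ((transcript p d n ρ x).take k).countP (fun op => decide (op ≠ HashOp.ins))

/-- The `k`-th character `g_k(x,y,ρ)` of the grid walk. -/
noncomputable def gridChar {α : Type} [DecidableEq α] (p : ℝ) (d n : ℕ) (ρ : Ufun α p d n)
    (x y : List (Option α)) (k : ℕ) : GOp :=
  if k < min (transcript p d n ρ x).length (transcript p d n ρ y).length then
    if x[idx p d n ρ x k]? ≠ y[idx p d n ρ y k]? then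
      match (transcript p d n ρ x).getD k HashOp.ins, (transcript p d n ρ y).getD k HashOp.ins with
      | HashOp.rep, HashOp.rep => GOp.grep
      | HashOp.rep, HashOp.ins => GOp.gdel
      | HashOp.ins, HashOp.rep => GOp.gins
      | HashOp.ins, HashOp.ins => GOp.gloop
      | _, _ => GOp.gstop
    else
      match (transcript p d n ρ x).getD k HashOp.ins with
      | HashOp.ins => GOp.gloop
      | _ => GOp.gmat
  else GOp.gstop

/-- The grid walk `g(x,y,ρ)`: a sequence of length `max(|τ(x,ρ)|,|τ(y,ρ)|)`. -/
noncomputable def gridWalk {α : Type} [DecidableEq α] (p : ℝ) (d n : ℕ) (ρ : Ufun α p d n)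
    (x y : List (Option α)) : List GOp :=
  (List.range (max (transcript p d n ρ x).length (transcript p d n ρ y).length)).map
    (gridChar p d n ρ x y)

/-- The grid walk is alive: both transcripts are complete and no `stop` occurs. -/
noncomputable def Alive {α : Type} [DecidableEq α] (p : ℝ) (d n : ℕ) (ρ : Ufun α p d n)
    (x y : List (Option α)) : Prop :=
  CompleteT p d n (transcript p d n ρ x) ∧ CompleteT p d n (transcript p d n ρ y) ∧
    GOp.gstop ∉ gridWalk p d n ρ x y

/-- The uniform probability measure on `[0,1) × [0,1)`. -/
noncomputable def unif01 : Measure (ℝ × ℝ) :=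
  (volume.restrict (Set.Ico (0 : ℝ) 1)).prod (volume.restrict (Set.Ico (0 : ℝ) 1))

instance : SigmaFinite unif01 := by unfold unif01; infer_instance

/-- The probability measure on underlying functions: all values independent, each
coordinate uniform on `[0,1)`. -/
noncomputable def μU (α : Type) [Fintype α] (p : ℝ) (d n : ℕ) : Measure (Ufun α p d n) :=
  Measure.pi fun _ : Option α × Fin (LN p d n) => unif01

/-- Costs for the Levenshtein distance (ported verbatim from the removed Mathlib file
`Mathlib/Data/List/EditDistance/Defs.lean`). -/
structure Levenshtein.Cost (α β δ : Type) where
  delete : α → δ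
  insert : β → δ
  substitute : α → β → δ

/-- The default cost: every insertion, deletion and substitution of distinct letters costs 1. -/
def Levenshtein.defaultCost {α : Type} [DecidableEq α] : Levenshtein.Cost α α ℕ where
  delete _ := 1
  insert _ := 1
  substitute a b := if a = b then 0 else 1

/-- Auxiliary step of the Levenshtein dynamic program (old Mathlib `Levenshtein.impl`). -/
def Levenshtein.impl {α β δ : Type} [AddZeroClass δ] [Min δ] (C : Levenshtein.Cost α β δ)
    (xs : List α) (y : β) (d : {r : List δ // 0 < r.length}) :
    {r : List δ // 0 < r.length} :=
  let ⟨ds, w⟩ := d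
  xs.zip (ds.zip ds.tail) |>.foldr
    (init := ⟨[C.insert y + ds.getLast (List.length_pos_iff.mp w)], by simp⟩)
    (fun ⟨x, d₀, d₁⟩ ⟨r, w⟩ =>
      ⟨min (C.delete x + r[0]) (min (C.insert y + d₀) (C.substitute x y + d₁)) :: r, by simp⟩)

/-- Levenshtein distances of all suffixes (old Mathlib `suffixLevenshtein`). -/
def suffixLevenshtein {α β δ : Type} [AddZeroClass δ] [Min δ] (C : Levenshtein.Cost α β δ)
    (xs : List α) (ys : List β) : {r : List δ // 0 < r.length} :=
  ys.foldr
    (Levenshtein.impl C xs)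
    (xs.foldr (init := ⟨[0], by simp⟩) (fun a ⟨r, w⟩ => ⟨(C.delete a + r[0]) :: r, by simp⟩))

/-- The Levenshtein distance (old Mathlib `levenshtein`). -/
def levenshtein {α β δ : Type} [AddZeroClass δ] [Min δ] (C : Levenshtein.Cost α β δ)
    (xs : List α) (ys : List β) : δ :=
  let ⟨r, w⟩ := suffixLevenshtein C xs ys
  r[0]

/-- Edit distance: the minimum number of single-character insertions, deletions and
replacements needed to transform `x` into `y`. -/
def ED {β : Type} [DecidableEq β] (x y : List β) : ℕ :=
  levenshtein Levenshtein.defaultCost x y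

/-- The smallest index at which `s` and `y` differ (`0` if `s = y`). -/
def firstDiff {β : Type} [DecidableEq β] (s y : List β) : ℕ :=
  (((List.range (max s.length y.length + 1)).find? fun i => decide (s[i]? ≠ y[i]?)).getD 0)

/-- Apply a single transformation operation to `s`, greedily relative to `y`. -/
def applyOp {β : Type} [DecidableEq β] [Inhabited β] (y s : List β) : TOp → List β
  | TOp.tins => s.insertIdx (firstDiff s y) (y.getD (firstDiff s y) default)
  | TOp.tdel => s.eraseIdx (firstDiff s y)
  | TOp.trep => s.set (firstDiff s y) (y.getD (firstDiff s y) default)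

/-- `T(x,y)`: greedily apply the transformation `T` to `x`, relative to `y`. -/
def applyT {β : Type} [DecidableEq β] [Inhabited β] (x y : List β) (T : List TOp) : List β :=
  T.foldl (fun s op => applyOp y s op) x

/-- `T` is valid for `x` and `y`. -/
def ValidT {β : Type} (T : List TOp) (x y : List β) : Prop :=
  T.countP (fun o => decide (o = TOp.tdel ∨ o = TOp.trep)) ≤ x.length ∧
    T.countP (fun o => decide (o = TOp.tins ∨ o = TOp.trep)) ≤ y.length

/-- `T` solves `x` and `y`. -/
def Solves {β : Type} [DecidableEq β] [Inhabited β] (T : List TOp) (x y : List β) : Prop :=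
  ValidT T x y ∧ applyT x y T = y ∧ ∀ i < T.length, applyT x y (T.take i) ≠ y

/-- Convert a grid walk character to a transformation operation (dropping loop/match/stop). -/
def toTOp : GOp → Option TOp
  | GOp.gins => some TOp.tins
  | GOp.gdel => some TOp.tdel
  | GOp.grep => some TOp.trep
  | _ => none

open Classical in
/-- The transformation `𝒯(x,y,ρ)` induced by `x`, `y` and `ρ`. -/
noncomputable def inducedT {α : Type} [DecidableEq α] (p : ℝ) (d n : ℕ) (ρ : Ufun α p d n)
    (x y : List (Option α)) : List TOp :=
  if Alive p d n ρ x y then (gridWalk p d n ρ x y).filterMap toTOp else []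

/-- Nodes of the graph `G(x,y)`: grid nodes `(i,j)` plus the stop node (`none`). -/
abbrev Node : Type := Option (ℕ × ℕ)

/-- The arcs of `G(x,y)`: `stepG x y v op = some v'` iff there is an arc labelled `op`
from `v` to `v'`; `none` means no outgoing arc with that label. -/
def stepG {α : Type} [DecidableEq α] (x y : List (Option α)) : Node → GOp → Option Node
  | none, _ => some none
  | some (i, j), op =>
    if i < x.length ∧ j < y.length then
      if i < x.length - 1 ∧ j < y.length - 1 then
        if x[i]? ≠ y[j]? then
          match op with
          | GOp.gdel => some (some (i + 1, j))
          | GOp.grep => some (some (i + 1, j + 1))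
          | GOp.gins => some (some (i, j + 1))
          | GOp.gloop => some (some (i, j))
          | GOp.gstop => some none
          | GOp.gmat => none
        else
          match op with
          | GOp.gmat => some (some (i + 1, j + 1))
          | GOp.gloop => some (some (i, j))
          | _ => none
      else if i = x.length - 1 ∧ j < y.length - 1 then
        match op with
        | GOp.gins => some (some (i, j + 1))
        | GOp.gloop => some (some (i, j))
        | GOp.gdel | GOp.grep | GOp.gstop => some none
        | GOp.gmat => none
      else if i < x.length - 1 ∧ j = y.length - 1 then
        match op with
        | GOp.gdel => some (some (i + 1, j))
        | GOp.gloop => some (some (i, j))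
        | GOp.gins | GOp.grep | GOp.gstop => some none
        | GOp.gmat => none
      else
        match op with
        | GOp.gloop => some (some (i, j))
        | _ => none
    else none

/-- Follow a list of grid-walk characters through `G(x,y)` starting at node `v`;
returns `none` if at some step the required arc does not exist. -/
def walkFrom {α : Type} [DecidableEq α] (x y : List (Option α)) : Node → List GOp → Option Node
  | v, [] => some v
  | v, op :: rest =>
    match stepG x y v op with
    | none => none
    | some v' => walkFrom x y v' rest

noncomputable def opOf {α : Type} (pav prv : ℝ) (ρ : Option α × ℕ → ℝ × ℝ)
    (c : Option α) (k : ℕ) : HashOp :=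
  if (ρ (c, k)).1 ≤ pav then HashOp.ins
  else if (ρ (c, k)).2 ≤ prv then HashOp.rep else HashOp.mat

def hashSymbol {α : Type} (op : HashOp) (c : Option α) : Option (Option α) :=
  if op = HashOp.mat then some c else none

section Loop

variable {α : Type} (pav prv : ℝ) (ρ : Option α × ℕ → ℝ × ℝ)

def remainingAfter (op : HashOp) (c : Option α) (rest : List (Option α)) : List (Option α) :=
  if op = HashOp.ins then c :: rest else rest

lemma transcriptAux_succ_cons (fuel : ℕ) (c : Option α) (rest : List (Option α)) (k : ℕ) :
    transcriptAux pav prv ρ (fuel + 1) (c :: rest) k =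
      opOf pav prv ρ c k ::
        transcriptAux pav prv ρ fuel (remainingAfter (opOf pav prv ρ c k) c rest) (k + 1) := by
  simp only [transcriptAux, opOf, remainingAfter]
  split_ifs <;> simp_all

lemma hashAux_succ_cons (fuel : ℕ) (c : Option α) (rest : List (Option α)) (k : ℕ) :
    hashAux pav prv ρ (fuel + 1) (c :: rest) k =
      hashSymbol (opOf pav prv ρ c k) c ::
        hashAux pav prv ρ fuel (remainingAfter (opOf pav prv ρ c k) c rest) (k + 1) := by
  simp only [hashAux, opOf, hashSymbol, remainingAfter]
  split_ifs <;> simp_all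

lemma length_hashAux :
    ∀ fuel (s : List (Option α)) k,
      (hashAux pav prv ρ fuel s k).length = (transcriptAux pav prv ρ fuel s k).length
  | 0, _, _ => rfl
  | _ + 1, [], _ => rfl
  | fuel + 1, c :: rest, k => by
    rw [hashAux_succ_cons, transcriptAux_succ_cons, List.length_cons, List.length_cons,
      length_hashAux]

/-- A loop that stops before running out of fuel has scanned its whole input. -/
lemma countP_transcriptAux_of_length_lt :
    ∀ fuel (s : List (Option α)) k, (transcriptAux pav prv ρ fuel s k).length < fuel →
      (transcriptAux pav prv ρ fuel s k).countP (· ≠ HashOp.ins) = s.length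
  | 0, _, _, h => absurd h (Nat.not_lt_zero _)
  | _ + 1, [], _, _ => rfl
  | fuel + 1, c :: rest, k, h => by
    rw [transcriptAux_succ_cons, List.length_cons, Nat.add_lt_add_iff_right] at h
    rw [transcriptAux_succ_cons, List.countP_cons,
      countP_transcriptAux_of_length_lt fuel _ (k + 1) h]
    by_cases hop : opOf pav prv ρ c k = HashOp.ins <;> simp [remainingAfter, hop]

lemma transcriptAux_getElem?_spec :
    ∀ fuel (s : List (Option α)) k m, m < (transcriptAux pav prv ρ fuel s k).length →
      ∃ c, s[((transcriptAux pav prv ρ fuel s k).take m).countP (· ≠ HashOp.ins)]? = some c ∧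
        (transcriptAux pav prv ρ fuel s k)[m]? = some (opOf pav prv ρ c (k + m)) ∧
        (hashAux pav prv ρ fuel s k)[m]? = some (hashSymbol (opOf pav prv ρ c (k + m)) c)
  | 0, _, _, _, h => absurd h (Nat.not_lt_zero _)
  | _ + 1, [], _, _, h => absurd h (Nat.not_lt_zero _)
  | fuel + 1, c :: rest, k, 0, _ => by
    simp [transcriptAux_succ_cons, hashAux_succ_cons]
  | fuel + 1, c :: rest, k, m + 1, h => by
    rw [transcriptAux_succ_cons, List.length_cons, Nat.add_lt_add_iff_right] at h
    obtain ⟨c', hc, hop, hsym⟩ := transcriptAux_getElem?_spec fuel _ (k + 1) m h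
    refine ⟨c', ?_, ?_, ?_⟩
    · rw [transcriptAux_succ_cons, List.take_succ_cons, List.countP_cons]
      by_cases hins : opOf pav prv ρ c k = HashOp.ins
      · simpa [remainingAfter, hins] using hc
      · simpa [remainingAfter, hins] using hc
    · rw [transcriptAux_succ_cons, List.getElem?_cons_succ, hop, Nat.add_right_comm, add_assoc]
    · rw [hashAux_succ_cons, List.getElem?_cons_succ, hsym, Nat.add_right_comm, add_assoc]

end Loop

section Hash

variable {α : Type} (p : ℝ) (d n : ℕ) (ρ : Ufun α p d n)

lemma length_hash (x : List (Option α)) :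
    (hash p d n ρ x).length = (transcript p d n ρ x).length :=
  length_hashAux _ _ _ _ x 0

lemma transcript_getElem?_spec (x : List (Option α)) {m : ℕ}
    (hm : m < (transcript p d n ρ x).length) :
    ∃ c, x[idx p d n ρ x m]? = some c ∧
      (transcript p d n ρ x)[m]? = some (opOf (pa p) (prr p) (ext p d n ρ) c m) ∧
      (hash p d n ρ x)[m]? = some (hashSymbol (opOf (pa p) (prr p) (ext p d n ρ) c m) c) := by
  simpa [transcript, hash, idx] using transcriptAux_getElem?_spec _ _ _ _ x 0 m hm

lemma idx_length_transcript {x : List (Option α)} (hc : CompleteT p d n (transcript p d n ρ x)) :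
    idx p d n ρ x (transcript p d n ρ x).length = x.length := by
  rw [idx, List.take_length]
  exact countP_transcriptAux_of_length_lt _ _ _ _ x 0 (Nat.lt_ceil.mpr hc)

lemma hash_eq_hash_iff (x y : List (Option α)) :
    hash p d n ρ x = hash p d n ρ y ↔
      (transcript p d n ρ x).length = (transcript p d n ρ y).length ∧
        ∀ m < (transcript p d n ρ x).length, (hash p d n ρ x)[m]? = (hash p d n ρ y)[m]? := by
  rw [← length_hash, ← length_hash]
  constructor
  · intro h
    simp [h]
  · rintro ⟨hlen, hm⟩
    refine List.ext_getElem? fun m => ?_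
    by_cases hmx : m < (hash p d n ρ x).length
    · exact hm m hmx
    · rw [List.getElem?_eq_none (by omega), List.getElem?_eq_none (by omega)]

variable [DecidableEq α]

/-- Equal characters are read with the same `ρ`-value, hence give the same operation; so the
hash symbols differ exactly when the characters differ and one of the operations is a match. -/
lemma hash_getElem?_eq_iff_gridChar_ne_gstop (x y : List (Option α)) {m : ℕ}
    (hmx : m < (transcript p d n ρ x).length) (hmy : m < (transcript p d n ρ y).length) :
    (hash p d n ρ x)[m]? = (hash p d n ρ y)[m]? ↔ gridChar p d n ρ x y m ≠ GOp.gstop := by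
  obtain ⟨cx, hcx, hopx, hsymx⟩ := transcript_getElem?_spec p d n ρ x hmx
  obtain ⟨cy, hcy, hopy, hsymy⟩ := transcript_getElem?_spec p d n ρ y hmy
  rw [hsymx, hsymy, gridChar, if_pos (lt_min hmx hmy), hcx, hcy,
    List.getD_eq_getElem?_getD, List.getD_eq_getElem?_getD, hopx, hopy]
  by_cases hc : cx = cy
  · subst hc
    cases opOf (pa p) (prr p) (ext p d n ρ) cx m <;> simp [hashSymbol]
  · cases opOf (pa p) (prr p) (ext p d n ρ) cx m <;>
      cases opOf (pa p) (prr p) (ext p d n ρ) cy m <;> simp [hashSymbol, hc]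

/-- Past the end of the shorter transcript the walk reads `stop`, so a stop-free walk forces
transcripts of equal length. -/
lemma gstop_not_mem_gridWalk_iff (x y : List (Option α)) :
    GOp.gstop ∉ gridWalk p d n ρ x y ↔
      (transcript p d n ρ x).length = (transcript p d n ρ y).length ∧
        ∀ m < (transcript p d n ρ x).length, gridChar p d n ρ x y m ≠ GOp.gstop := by
  simp only [gridWalk, List.mem_map, List.mem_range, not_exists, not_and]
  constructor
  · intro h
    have hlen : (transcript p d n ρ x).length = (transcript p d n ρ y).length := by
      by_contra hne
      refine h (min (transcript p d n ρ x).length (transcript p d n ρ y).length) (by omega) ?_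
      rw [gridChar, if_neg (lt_irrefl _)]
    exact ⟨hlen, fun m hm => h m (by omega)⟩
  · rintro ⟨hlen, h⟩ m hm
    exact h m (by omega)

end Hash

theorem stmt3_general {α : Type} [DecidableEq α]
    (p : ℝ) (n d : ℕ)
    (x y : List (Option α))
    (ρ : Ufun α p d n)
    (hcx : CompleteT p d n (transcript p d n ρ x))
    (hcy : CompleteT p d n (transcript p d n ρ y)) :
    (hash p d n ρ x = hash p d n ρ y ↔ Alive p d n ρ x y) ∧
    (hash p d n ρ x = hash p d n ρ y →
      (transcript p d n ρ x).length = (transcript p d n ρ y).length ∧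
      idx p d n ρ x (transcript p d n ρ x).length = x.length ∧
      idx p d n ρ y (transcript p d n ρ y).length = y.length) := by
  have hcollision : hash p d n ρ x = hash p d n ρ y ↔ Alive p d n ρ x y := by
    rw [Alive, gstop_not_mem_gridWalk_iff, hash_eq_hash_iff, and_iff_right hcx, and_iff_right hcy]
    refine and_congr_right fun hlen => forall₂_congr fun m hm => ?_
    exact hash_getElem?_eq_iff_gridChar_ne_gstop p d n ρ x y hm (hlen ▸ hm)
  exact ⟨hcollision, fun h => ⟨((hash_eq_hash_iff p d n ρ x y).mp h).1,
    idx_length_transcript p d n ρ hcx, idx_length_transcript p d n ρ hcy⟩⟩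

/-- if both transcripts are complete, then `h_ρ(x) = h_ρ(y)` iff the grid walk
is alive; moreover, on collision the transcripts have equal length and the walk reaches the
final corner `(|x|,|y|)` of the grid. -/
theorem stmt3 {α : Type} [Fintype α] [DecidableEq α]
    (p : ℝ) (hp0 : 0 < p) (hp : p ≤ 1 / 3) (n d : ℕ) (hn : 2 ≤ n) (hd : 1 ≤ d)
    (x y : List (Option α)) (hx : DollarTerminal x) (hy : DollarTerminal y)
    (ρ : Ufun α p d n)
    (hcx : CompleteT p d n (transcript p d n ρ x))
    (hcy : CompleteT p d n (transcript p d n ρ y)) :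
    (hash p d n ρ x = hash p d n ρ y ↔ Alive p d n ρ x y) ∧
    (hash p d n ρ x = hash p d n ρ y →
      (transcript p d n ρ x).length = (transcript p d n ρ y).length ∧
      idx p d n ρ x (transcript p d n ρ x).length = x.length ∧
      idx p d n ρ y (transcript p d n ρ y).length = y.length) :=
  stmt3_general p n d x y ρ hcx hcy

end EditLSH
end

section
/- Let x and y be strings over Σ, neither containing the character $, with ED(x,y) = r. Then: (i) there exists a transformation T of length r that solves x·$ and y·$ (where x·$ denotes x with $ appended); and (ii) there is no transformation T' of length strictly less than r that solves x·$ and y·$. -/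
open MeasureTheory

namespace EditLSH

/-!
The greedy semantics always acts at the first position where the current string `s` disagrees
with the target `y`. Writing `s = P ++ a :: u` and `y = P ++ b :: v` there, the recursion
`ED (a :: u) (b :: v) = 1 + min (ED u (b :: v)) (ED (a :: u) v) (ED u v)` says that one of
delete, insert and replace lowers the distance by exactly one, so iterating reaches `y` after
`ED s y` operations. Conversely a single operation changes the edit distance by at most one, so
no shorter transformation (in particular no proper prefix) reaches `y`. A deletion or replacement
consumes a character of `s` behind the common prefix, an insertion or replacement one of `y`,
which bounds the operation counts required for validity. Finally `ED (x ++ [$]) (y ++ [$]) =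
ED x y`.
-/

section Levenshtein

variable {γ β' δ : Type} [AddZeroClass δ] [Min δ] (C : Levenshtein.Cost γ β' δ)

theorem Levenshtein.impl_length (y : β') :
    ∀ (xs : List γ) (d : {r : List δ // 0 < r.length}),
      d.1.length = xs.length + 1 → (Levenshtein.impl C xs y d).1.length = xs.length + 1
  | [], ⟨[_], _⟩, _ => rfl
  | [], ⟨[], _⟩, h | [], ⟨_ :: _ :: _, _⟩, h => by simp at h
  | _ :: _, ⟨[], _⟩, h | _ :: _, ⟨[_], _⟩, h => by simp at h
  | _ :: xs, ⟨_ :: d₂ :: ds, _⟩, h => by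
    change (_ :: (Levenshtein.impl C xs y ⟨d₂ :: ds, by simp⟩).1).length = _
    simpa using Levenshtein.impl_length y xs ⟨d₂ :: ds, by simp⟩ (by simpa using h)

theorem levenshtein_eq_getElem_zero (xs : List γ) (ys : List β') :
    levenshtein C xs ys = (suffixLevenshtein C xs ys).1[0]'(suffixLevenshtein C xs ys).2 := rfl

theorem suffixLevenshtein_length (xs : List γ) (ys : List β') :
    (suffixLevenshtein C xs ys).1.length = xs.length + 1 := by
  induction ys with
  | nil =>
    induction xs with
    | nil => rfl
    | cons x xs ih => exact congrArg (· + 1) ih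
  | cons y ys ih => exact Levenshtein.impl_length C y xs _ ih

theorem suffixLevenshtein_cons_left_tail (x : γ) (xs : List γ) (ys : List β') :
    (suffixLevenshtein C (x :: xs) ys).1.tail = (suffixLevenshtein C xs ys).1 := by
  induction ys with
  | nil => rfl
  | cons y ys ih =>
    change (Levenshtein.impl C (x :: xs) y (suffixLevenshtein C (x :: xs) ys)).1.tail =
      (Levenshtein.impl C xs y (suffixLevenshtein C xs ys)).1
    generalize suffixLevenshtein C (x :: xs) ys = s at ih ⊢
    generalize suffixLevenshtein C xs ys = t at ih ⊢
    obtain ⟨_ | ⟨d₁, l⟩, ws⟩ := s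
    · simp at ws
    obtain ⟨_ | ⟨d₂, ds⟩, wt⟩ := t
    · simp at wt
    simp only [List.tail_cons] at ih
    subst ih
    rfl

@[simp] theorem levenshtein_cons_nil (x : γ) (xs : List γ) :
    levenshtein C (x :: xs) ([] : List β') = C.delete x + levenshtein C xs [] := rfl

@[simp] theorem levenshtein_nil_cons (y : β') (ys : List β') :
    levenshtein C ([] : List γ) (y :: ys) = C.insert y + levenshtein C [] ys := by
  have hl := suffixLevenshtein_length C ([] : List γ) ys
  change (Levenshtein.impl C [] y (suffixLevenshtein C [] ys)).1[0]'
    (Levenshtein.impl C [] y _).2 = C.insert y + (suffixLevenshtein C [] ys).1[0]'(by simp [hl])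
  generalize suffixLevenshtein C ([] : List γ) ys = s at hl ⊢
  obtain ⟨_ | ⟨_, _ | ⟨_, _⟩⟩, w⟩ := s
  · simp at w
  · rfl
  · simp at hl

theorem levenshtein_cons_cons (x : γ) (xs : List γ) (y : β') (ys : List β') :
    levenshtein C (x :: xs) (y :: ys) =
      min (C.delete x + levenshtein C xs (y :: ys))
        (min (C.insert y + levenshtein C (x :: xs) ys)
          (C.substitute x y + levenshtein C xs ys)) := by
  simp only [levenshtein_eq_getElem_zero]
  have ht := suffixLevenshtein_cons_left_tail C x xs ys
  change (Levenshtein.impl C (x :: xs) y (suffixLevenshtein C (x :: xs) ys)).1[0]'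
      (Levenshtein.impl C (x :: xs) y _).2 =
    min (C.delete x + (Levenshtein.impl C xs y (suffixLevenshtein C xs ys)).1[0]'
      (Levenshtein.impl C xs y _).2) _
  generalize suffixLevenshtein C (x :: xs) ys = s at ht ⊢
  generalize suffixLevenshtein C xs ys = t at ht ⊢
  obtain ⟨_ | ⟨d₁, l⟩, ws⟩ := s
  · simp at ws
  obtain ⟨_ | ⟨d₂, ds⟩, wt⟩ := t
  · simp at wt
  simp only [List.tail_cons] at ht
  subst ht
  rfl

end Levenshtein

section EditDistance

variable {β : Type} [DecidableEq β]

@[simp] theorem ED_nil_left (y : List β) : ED [] y = y.length := by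
  induction y with
  | nil => rfl
  | cons b y ih => simp_all [ED, Levenshtein.defaultCost, add_comm]

@[simp] theorem ED_nil_right (x : List β) : ED x [] = x.length := by
  induction x with
  | nil => rfl
  | cons a x ih => simp_all [ED, Levenshtein.defaultCost, add_comm]

theorem ED_cons_cons (a b : β) (x y : List β) :
    ED (a :: x) (b :: y) =
      min (1 + ED x (b :: y)) (min (1 + ED (a :: x) y) ((if a = b then 0 else 1) + ED x y)) :=
  levenshtein_cons_cons _ a x b y

@[simp] theorem ED_self (x : List β) : ED x x = 0 := by
  induction x with
  | nil => rfl
  | cons a x ih => simp [ED_cons_cons, ih]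

theorem ED_cons_left_le (a : β) (x z : List β) : ED (a :: x) z ≤ ED x z + 1 := by
  cases z with
  | nil => simp
  | cons c z => rw [ED_cons_cons]; omega

theorem ED_cons_right_le (c : β) (x z : List β) : ED x (c :: z) ≤ ED x z + 1 := by
  cases x with
  | nil => simp
  | cons a x => rw [ED_cons_cons]; omega

theorem ED_cons_cons_le (a c : β) (x z : List β) :
    ED (a :: x) (c :: z) ≤ ED x z + if a = c then 0 else 1 := by
  rw [ED_cons_cons]; omega

theorem length_right_le_add_ED : ∀ x y : List β, y.length ≤ x.length + ED x y
  | [], y => by simp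
  | a :: x, [] => by simp
  | a :: x, b :: y => by
    have := length_right_le_add_ED x (b :: y)
    have := length_right_le_add_ED (a :: x) y
    have := length_right_le_add_ED x y
    simp only [List.length_cons, ED_cons_cons] at *
    split_ifs at * <;> omega
termination_by x y => x.length + y.length

theorem length_left_le_add_ED : ∀ x y : List β, x.length ≤ y.length + ED x y
  | [], y => by simp
  | a :: x, [] => by simp
  | a :: x, b :: y => by
    have := length_left_le_add_ED x (b :: y)
    have := length_left_le_add_ED (a :: x) y
    have := length_left_le_add_ED x y
    simp only [List.length_cons, ED_cons_cons] at *
    split_ifs at * <;> omega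
termination_by x y => x.length + y.length

theorem ED_le_length_add_length (x y : List β) : ED x y ≤ x.length + y.length := by
  induction x with
  | nil => simp
  | cons a x ih => have := ED_cons_left_le a x y; simp only [List.length_cons]; omega

theorem ED_triangle : ∀ x y z : List β, ED x z ≤ ED x y + ED y z
  | x, [], z => by
    have := ED_le_length_add_length x z
    simp only [ED_nil_right, ED_nil_left]; omega
  | [], b :: y, z => by
    have := length_right_le_add_ED (b :: y) z
    simp only [ED_nil_left, List.length_cons] at *; omega
  | a :: x, b :: y, [] => by
    have := length_left_le_add_ED (a :: x) (b :: y)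
    simp only [ED_nil_right, List.length_cons] at *; omega
  | a :: x, b :: y, c :: z => by
    have := ED_cons_cons a b x y
    have := ED_cons_cons b c y z
    have := ED_triangle x (b :: y) (c :: z)
    have := ED_triangle (a :: x) y (c :: z)
    have := ED_triangle x y (c :: z)
    have := ED_triangle (a :: x) y z
    have := ED_triangle x (b :: y) z
    have := ED_triangle x y z
    have := ED_triangle (a :: x) (b :: y) z
    have := ED_cons_right_le c (a :: x) z
    have := ED_cons_left_le a x (c :: z)
    have := ED_cons_cons_le a c x z
    have : (if a = c then 0 else 1 : ℕ) ≤
        (if a = b then 0 else 1) + if b = c then 0 else 1 := by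
      split_ifs <;> simp_all
    omega
termination_by x y z => x.length + y.length + z.length

@[simp] theorem ED_cons_cons_self (c : β) (u v : List β) : ED (c :: u) (c :: v) = ED u v := by
  have := ED_triangle u (c :: v) v
  have := ED_cons_left_le c v v
  have := ED_triangle u (c :: u) v
  have := ED_cons_right_le c u u
  simp only [ED_self, ED_cons_cons, if_true] at *
  omega

@[simp] theorem ED_append_left (p u v : List β) : ED (p ++ u) (p ++ v) = ED u v := by
  induction p with
  | nil => rfl
  | cons c p ih => simpa using ih

@[simp] theorem ED_append_right_self (p u : List β) : ED (p ++ u) p = u.length := by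
  simpa using ED_append_left p u []

@[simp] theorem ED_self_append_right (p v : List β) : ED p (p ++ v) = v.length := by
  simpa using ED_append_left p [] v

theorem ED_append_singleton (c : β) : ∀ x y : List β, ED (x ++ [c]) (y ++ [c]) = ED x y
  | [], [] => by simp
  | [], b :: y => by
    have := ED_append_singleton c [] y
    simp only [List.nil_append, List.cons_append, ED_cons_cons, ED_nil_left, List.length_append,
      List.length_cons, List.length_nil] at *
    split_ifs <;> omega
  | a :: x, [] => by
    have := ED_append_singleton c x []
    simp only [List.nil_append, List.cons_append, ED_cons_cons, ED_nil_right,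
      List.length_append, List.length_cons, List.length_nil] at *
    split_ifs <;> omega
  | a :: x, b :: y => by
    have ih₁ := ED_append_singleton c x (b :: y)
    have ih₂ := ED_append_singleton c (a :: x) y
    have ih₃ := ED_append_singleton c x y
    simp only [List.cons_append] at *
    rw [ED_cons_cons, ED_cons_cons a b, ih₁, ih₂, ih₃]
termination_by x y => x.length + y.length

theorem ED_map_of_injective {γ : Type} [DecidableEq γ] {f : β → γ} (hf : f.Injective) :
    ∀ x y : List β, ED (x.map f) (y.map f) = ED x y
  | [], y => by simp
  | a :: x, [] => by simp
  | a :: x, b :: y => by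
    have ih₁ := ED_map_of_injective hf x (b :: y)
    have ih₂ := ED_map_of_injective hf (a :: x) y
    have ih₃ := ED_map_of_injective hf x y
    simp only [List.map_cons] at *
    rw [ED_cons_cons, ED_cons_cons a b, ih₁, ih₂, ih₃]
    simp only [hf.eq_iff]
termination_by x y => x.length + y.length

theorem ED_eq_zero_iff : ∀ {x y : List β}, ED x y = 0 ↔ x = y
  | [], y => by cases y <;> simp
  | a :: x, [] => by simp
  | a :: x, b :: y => by
    constructor
    · intro h
      rw [ED_cons_cons] at h
      have hxy : ED x y = 0 := by omega
      have hab : a = b := by by_contra hab; simp [hab] at h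
      rw [hab, ED_eq_zero_iff.mp hxy]
    · intro h
      rw [h, ED_self]

theorem ED_insertIdx_le_one : ∀ (j : ℕ) (s : List β) (c : β), ED s (s.insertIdx j c) ≤ 1
  | 0, s, c => by simpa using ED_cons_right_le c s s
  | _ + 1, [], _ => by simp
  | j + 1, a :: s, c => by simpa using ED_insertIdx_le_one j s c

theorem ED_eraseIdx_le_one : ∀ (j : ℕ) (s : List β), ED s (s.eraseIdx j) ≤ 1
  | _, [] => by simp
  | 0, a :: s => by simpa using ED_cons_left_le a s s
  | j + 1, a :: s => by simpa using ED_eraseIdx_le_one j s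

theorem ED_set_le_one : ∀ (j : ℕ) (s : List β) (c : β), ED s (s.set j c) ≤ 1
  | _, [], _ => by simp
  | 0, a :: s, c => by
    have := ED_cons_cons_le a c s s
    simp only [List.set_cons_zero, ED_self, zero_add] at *
    split_ifs at this <;> omega
  | j + 1, a :: s, c => by simpa using ED_set_le_one j s c

end EditDistance

section FirstDiff

variable {β : Type} [DecidableEq β]

theorem firstDiff_spec {s y : List β} (h : s ≠ y) :
    s[firstDiff s y]? ≠ y[firstDiff s y]? ∧ ∀ j < firstDiff s y, s[j]? = y[j]? := by
  obtain ⟨i, hi, hne⟩ : ∃ i < max s.length y.length + 1, s[i]? ≠ y[i]? := by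
    by_contra! hc
    refine h (List.ext_getElem? fun n => ?_)
    by_cases hn : n < max s.length y.length + 1
    · exact hc n hn
    · rw [List.getElem?_eq_none (by omega), List.getElem?_eq_none (by omega)]
  unfold firstDiff
  rcases hf : (List.range (max s.length y.length + 1)).find? (fun i => decide (s[i]? ≠ y[i]?))
    with _ | j
  · exact absurd (List.find?_range_eq_none.mp hf i hi) (by simpa using hne)
  · simp only [List.find?_range_eq_some, decide_eq_true_eq] at hf
    exact ⟨hf.1, fun k hk => by simpa using hf.2.2 k hk⟩

theorem firstDiff_le_length {s y : List β} (h : s ≠ y) : firstDiff s y ≤ s.length := by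
  obtain ⟨hdiff, hagree⟩ := firstDiff_spec h
  by_contra! hlt
  have hy : y.length ≤ s.length := by
    have := hagree s.length hlt
    rw [List.getElem?_eq_none le_rfl, eq_comm, List.getElem?_eq_none_iff] at this
    exact this
  exact hdiff (by rw [List.getElem?_eq_none (by omega), List.getElem?_eq_none (by omega)])

theorem length_le_firstDiff {P s y : List β} (h : P ++ s ≠ P ++ y) :
    P.length ≤ firstDiff (P ++ s) (P ++ y) := by
  by_contra! hlt
  exact (firstDiff_spec h).1
    (by rw [List.getElem?_append_left hlt, List.getElem?_append_left hlt])

theorem exists_eq_append_firstDiff {s y : List β} (h : s ≠ y) :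
    ∃ P s' y', s = P ++ s' ∧ y = P ++ y' ∧ s'.head? ≠ y'.head? ∧
      firstDiff s y = P.length := by
  obtain ⟨hdiff, hagree⟩ := firstDiff_spec h
  have hle := firstDiff_le_length h
  have htake : s.take (firstDiff s y) = y.take (firstDiff s y) :=
    List.ext_getElem? fun j => by
      simp only [List.getElem?_take]
      split_ifs with hj
      exacts [hagree j hj, rfl]
  refine ⟨s.take (firstDiff s y), s.drop (firstDiff s y), y.drop (firstDiff s y),
    (List.take_append_drop _ s).symm, by rw [htake, List.take_append_drop], ?_, ?_⟩
  · simpa using hdiff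
  · simp [hle]

end FirstDiff

theorem _root_.List.insertIdx_append_length {β : Type} (P s : List β) (c : β) :
    (P ++ s).insertIdx P.length c = P ++ c :: s := by
  induction P with
  | nil => rfl
  | cons p P ih => simp [ih]

def TOp.sourceCost : TOp → ℕ
  | .tins => 0
  | _ => 1

def TOp.targetCost : TOp → ℕ
  | .tdel => 0
  | _ => 1

theorem countP_delete_or_replace_cons (op : TOp) (T : List TOp) :
    (op :: T).countP (fun o => decide (o = TOp.tdel ∨ o = TOp.trep)) =
      T.countP (fun o => decide (o = TOp.tdel ∨ o = TOp.trep)) + op.sourceCost := by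
  cases op <;> simp [TOp.sourceCost]

theorem countP_insert_or_replace_cons (op : TOp) (T : List TOp) :
    (op :: T).countP (fun o => decide (o = TOp.tins ∨ o = TOp.trep)) =
      T.countP (fun o => decide (o = TOp.tins ∨ o = TOp.trep)) + op.targetCost := by
  cases op <;> simp [TOp.targetCost]

section Greedy

variable {β : Type} [DecidableEq β] [Inhabited β]

theorem applyOp_tins_of_firstDiff {P s v : List β} {b : β}
    (hfd : firstDiff (P ++ s) (P ++ b :: v) = P.length) :
    applyOp (P ++ b :: v) (P ++ s) TOp.tins = P ++ b :: s := by
  simp [applyOp, hfd, List.insertIdx_append_length, List.getD_eq_getElem?_getD]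

theorem applyOp_tdel_of_firstDiff {P u y : List β} {a : β}
    (hfd : firstDiff (P ++ a :: u) y = P.length) :
    applyOp y (P ++ a :: u) TOp.tdel = P ++ u := by
  simp [applyOp, hfd, List.eraseIdx_append_of_length_le]

theorem applyOp_trep_of_firstDiff {P u v : List β} {a b : β}
    (hfd : firstDiff (P ++ a :: u) (P ++ b :: v) = P.length) :
    applyOp (P ++ b :: v) (P ++ a :: u) TOp.trep = P ++ b :: u := by
  simp [applyOp, hfd, List.getD_eq_getElem?_getD]

theorem exists_applyOp_ED_add_one {s y : List β} (h : s ≠ y) :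
    ∃ op : TOp, ED (applyOp y s op) y + 1 = ED s y ∧
      (applyOp y s op).length + op.sourceCost = s.length + op.targetCost ∧
      ∃ R s₁ y₁, applyOp y s op = R ++ s₁ ∧ y = R ++ y₁ ∧
        R.length = firstDiff s y + op.targetCost := by
  obtain ⟨P, s', y', rfl, rfl, hhead, hfd⟩ := exists_eq_append_firstDiff h
  rcases s' with _ | ⟨a, u⟩ <;> rcases y' with _ | ⟨b, v⟩
  · simp at hhead
  · refine ⟨TOp.tins, ?_⟩
    rw [applyOp_tins_of_firstDiff hfd, hfd]
    refine ⟨?_, ?_, P ++ [b], [], v, ?_⟩ <;> simp [TOp.sourceCost, TOp.targetCost]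
  · refine ⟨TOp.tdel, ?_⟩
    rw [applyOp_tdel_of_firstDiff hfd, hfd]
    refine ⟨?_, ?_, P, u, [], ?_⟩ <;> simp [TOp.sourceCost, TOp.targetCost]
    omega
  have hab : a ≠ b := by simpa using hhead
  have hED := ED_cons_cons a b u v
  rw [if_neg hab] at hED
  rcases min_choice (1 + ED u (b :: v)) (min (1 + ED (a :: u) v) (1 + ED u v)) with hmin | hmin
  · refine ⟨TOp.tdel, ?_⟩
    rw [applyOp_tdel_of_firstDiff hfd, hfd]
    refine ⟨?_, ?_, P, u, b :: v, ?_⟩ <;> simp [TOp.sourceCost, TOp.targetCost] <;> omega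
  rcases min_choice (1 + ED (a :: u) v) (1 + ED u v) with hmin' | hmin'
  · refine ⟨TOp.tins, ?_⟩
    rw [applyOp_tins_of_firstDiff hfd, hfd]
    refine ⟨?_, ?_, P ++ [b], a :: u, v, ?_⟩ <;>
      simp [TOp.sourceCost, TOp.targetCost] <;> omega
  · refine ⟨TOp.trep, ?_⟩
    rw [applyOp_trep_of_firstDiff hfd, hfd]
    refine ⟨?_, ?_, P ++ [b], u, v, ?_⟩ <;> simp [TOp.sourceCost, TOp.targetCost]
    omega

/-- Quantifying over all common prefixes `R` makes the count bounds inductive; validity is the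
case `R = []`. -/
theorem exists_applyT_eq_of_ED (y : List β) : ∀ (n : ℕ) (s : List β), ED s y = n →
    ∃ T : List TOp, T.length = n ∧ applyT s y T = y ∧
      ∀ R s' y', s = R ++ s' → y = R ++ y' →
        T.countP (fun o => decide (o = TOp.tdel ∨ o = TOp.trep)) ≤ s'.length ∧
        T.countP (fun o => decide (o = TOp.tins ∨ o = TOp.trep)) ≤ y'.length
  | 0, s, hED => ⟨[], rfl, ED_eq_zero_iff.mp hED, by simp⟩
  | n + 1, s, hED => by
    have hsy : s ≠ y := by rintro rfl; simp at hED
    obtain ⟨op, hED', hlen, R₁, s₁, y₁, hs₁, hy₁, hR₁⟩ :=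
      exists_applyOp_ED_add_one hsy
    obtain ⟨T, hT, happ, hcount⟩ := exists_applyT_eq_of_ED y n (applyOp y s op) (by omega)
    refine ⟨op :: T, by simp [hT], happ, fun R s' y' hs hy => ?_⟩
    have hR : R.length ≤ firstDiff s y := by
      subst hs hy
      exact length_le_firstDiff hsy
    have := hcount R₁ s₁ y₁ hs₁ hy₁
    have := congrArg List.length hs; have := congrArg List.length hy
    have := congrArg List.length hs₁; have := congrArg List.length hy₁
    simp only [List.length_append] at *
    rw [countP_delete_or_replace_cons, countP_insert_or_replace_cons]
    omega

theorem ED_le_ED_applyOp_add_one (y s : List β) (op : TOp) :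
    ED s y ≤ ED (applyOp y s op) y + 1 := by
  have hstep : ED s (applyOp y s op) ≤ 1 := by
    cases op
    · exact ED_insertIdx_le_one _ _ _
    · exact ED_eraseIdx_le_one _ _
    · exact ED_set_le_one _ _ _
  have := ED_triangle s (applyOp y s op) y
  omega

theorem ED_le_length_of_applyT_eq (y : List β) :
    ∀ {T : List TOp} {s : List β}, applyT s y T = y → ED s y ≤ T.length
  | [], s, h => by simp [show s = y from h]
  | op :: T, s, h => by
    have := ED_le_length_of_applyT_eq y (s := applyOp y s op) h
    have := ED_le_ED_applyOp_add_one y s op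
    simp only [List.length_cons]
    omega

theorem ED_le_length_of_solves {T : List TOp} {s y : List β} (h : Solves T s y) :
    ED s y ≤ T.length :=
  ED_le_length_of_applyT_eq y h.2.1

theorem exists_solves_length_eq_ED (s y : List β) :
    ∃ T : List TOp, T.length = ED s y ∧ Solves T s y := by
  obtain ⟨T, hT, happ, hcount⟩ := exists_applyT_eq_of_ED y _ s rfl
  refine ⟨T, hT, hcount [] s y rfl rfl, happ, fun i hi hprefix => ?_⟩
  have := ED_le_length_of_applyT_eq y hprefix
  simp only [List.length_take] at this
  omega

end Greedy

/-- if `ED(x,y) = r` then there is a transformation of length `r` solving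
`x·$` and `y·$`, and none of length `< r`. -/
theorem stmt5 {α : Type} [DecidableEq α] (x y : List α) (r : ℕ) (hED : ED x y = r) :
    (∃ T : List TOp, T.length = r ∧
      Solves T (x.map some ++ [none]) (y.map some ++ [none])) ∧
    ¬ ∃ T' : List TOp, T'.length < r ∧
      Solves T' (x.map some ++ [none]) (y.map some ++ [none]) := by
  have hr : ED (x.map some ++ [none]) (y.map some ++ [none]) = r := by
    rw [ED_append_singleton, ED_map_of_injective (Option.some_injective α), hED]
  refine ⟨hr ▸ exists_solves_length_eq_ED _ _, ?_⟩
  rintro ⟨T', hlt, hT'⟩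
  have := ED_le_length_of_solves hT'
  omega

end EditLSH
end
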